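/- arXiv:0705.4300 — 2 statements merged into one kernel-verified Lean document; each statement's English description precedes it below -/
import Mathlib

section
/- Let ŵ be measurable, nonpositive a.e., even (ŵ(y) = ŵ(−y)), and homogeneous in the sense that there exist C₁, C₂ > 0 with C₁ h^λ ŵ(x) ≤ ŵ(hx) ≤ C₂ h^λ ŵ(x) for all h > 0 and x ∈ ℝ^d. Let Ω ⊆ ℝ^d be measurable and define σ(x) = a + h(x − t) for fixed a, t ∈ ℝ^d and h > 0. Then there exist constants K₁, K₂ > 0, independent of Ω, a, t, h, such that for every f ∈ C^m with the seminorm |f|_{m,σ(Ω)} finite: K₁ · h^{m − λ/2 − d} |f|_{m,σ(Ω)} ≤ |f ∘ σ|_{m,Ω} ≤ K₂ · h^{m − λ/2 − d} |f|_{m,σ(Ω)}. -/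
open MeasureTheory Finset

noncomputable def pderiv' {d : ℕ} (i : Fin d)
    (f : EuclideanSpace ℝ (Fin d) → ℝ) : EuclideanSpace ℝ (Fin d) → ℝ :=
  fun x => fderiv ℝ f x (EuclideanSpace.single i 1)

noncomputable def mderiv {d : ℕ} (α : Fin d → ℕ)
    (f : EuclideanSpace ℝ (Fin d) → ℝ) : EuclideanSpace ℝ (Fin d) → ℝ :=
  (List.finRange d).foldr (fun i g => (pderiv' i)^[α i] g) f

/-- The squared local seminorm
`|f|²_{m,A} = -(1/2) Σ_{|α|=m} c_α ∫_A ∫_A ŵ(x−y)|D^α f(x) − D^α f(y)|² dx dy`. -/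
noncomputable def semiSqOn (d m : ℕ) (wh : EuclideanSpace ℝ (Fin d) → ℝ)
    (c : (Fin d → ℕ) → ℝ) (A : Set (EuclideanSpace ℝ (Fin d)))
    (f : EuclideanSpace ℝ (Fin d) → ℝ) : ℝ :=
  -(1 / 2) * ∑ α ∈ Finset.Nat.antidiagonalTuple d m, c α *
    ∫ x in A, ∫ y in A, wh (x - y) * (mderiv α f x - mderiv α f y) ^ 2


open ENNReal
section partA
open MvPolynomial

lemma coeff_nonneg_mul {σ : Type*} [DecidableEq σ] {p q : MvPolynomial σ ℝ}
    (hp : ∀ n, 0 ≤ coeff n p) (hq : ∀ n, 0 ≤ coeff n q) (n : σ →₀ ℕ) :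
    0 ≤ coeff n (p * q) := by
  rw [coeff_mul]
  exact Finset.sum_nonneg fun x _ => mul_nonneg (hp _) (hq _)

lemma coeff_nonneg_pow {σ : Type*} [DecidableEq σ] {p : MvPolynomial σ ℝ}
    (hp : ∀ n, 0 ≤ coeff n p) (m : ℕ) (n : σ →₀ ℕ) : 0 ≤ coeff n (p ^ m) := by
  induction m generalizing n with
  | zero =>
    rw [pow_zero, coeff_one]
    split <;> norm_num
  | succ k ih => rw [pow_succ]; exact coeff_nonneg_mul ih hp n

lemma prod_X_pow_univ {d : ℕ} (n : Fin d →₀ ℕ) :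
    (∏ i, (X i : MvPolynomial (Fin d) ℝ) ^ (n i)) = monomial n 1 := by
  rw [← MvPolynomial.prod_X_pow_eq_monomial]
  exact (Finset.prod_subset (Finset.subset_univ _) (by
    intro i _ h
    rw [Finsupp.notMem_support_iff.mp h, pow_zero])).symm

lemma c_nonneg (d m : ℕ) (c : (Fin d → ℕ) → ℝ)
    (hc : ∀ x : Fin d → ℝ,
      ∑ α ∈ Finset.Nat.antidiagonalTuple d m, c α * ∏ i, x i ^ (2 * α i)
        = (∑ i, x i ^ 2) ^ m) :
    ∀ α ∈ Finset.Nat.antidiagonalTuple d m, 0 ≤ c α := by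
  intro β hβ
  classical
  set D : (Fin d → ℕ) → (Fin d →₀ ℕ) :=
    fun α => Finsupp.equivFunOnFinite.symm (fun i => 2 * α i) with hD
  have hDapp : ∀ α i, D α i = 2 * α i := fun α i => rfl
  have hDinj : ∀ α, D α = D β → α = β := by
    intro α hαβ
    funext i
    have := congrArg (fun g => g i) hαβ
    simp only [hDapp] at this
    omega
  set P : MvPolynomial (Fin d) ℝ :=
    ∑ α ∈ Finset.Nat.antidiagonalTuple d m, C (c α) * ∏ i, X i ^ (2 * α i) with hP
  set Q : MvPolynomial (Fin d) ℝ := (∑ i, X i ^ 2) ^ m with hQ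
  have hPQ : P = Q := by
    apply MvPolynomial.funext
    intro x
    rw [hP, hQ]
    simp only [map_sum, map_pow, map_mul, eval_C, eval_prod, eval_pow, eval_X, map_prod]
    exact hc x
  have hmono : ∀ α : Fin d → ℕ,
      (∏ i, (X i : MvPolynomial (Fin d) ℝ) ^ (2 * α i)) = monomial (D α) 1 := by
    intro α
    rw [← prod_X_pow_univ (D α)]
    rfl
  have hcoeffP : coeff (D β) P = c β := by
    rw [hP, coeff_sum]
    rw [Finset.sum_eq_single β]
    · rw [hmono, coeff_C_mul, coeff_monomial, if_pos rfl, mul_one]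
    · intro α hα hne
      rw [hmono, coeff_C_mul, coeff_monomial, if_neg, mul_zero]
      exact fun hEq => hne (hDinj α hEq)
    · intro hβ'; exact absurd hβ hβ'
  have hcoeffQ : 0 ≤ coeff (D β) Q := by
    rw [hQ]
    apply coeff_nonneg_pow
    intro n
    rw [coeff_sum]
    apply Finset.sum_nonneg
    intro i _
    rw [X_pow_eq_monomial, coeff_monomial]
    split <;> norm_num
  rw [← hcoeffP, hPQ]; exact hcoeffQ

end partA

variable {d : ℕ}

noncomputable def dList (L : List (Fin d)) (f : EuclideanSpace ℝ (Fin d) → ℝ) :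
    EuclideanSpace ℝ (Fin d) → ℝ :=
  L.foldr (fun i g => pderiv' i g) f

lemma dList_cons (i : Fin d) (L : List (Fin d)) (f) :
    dList (i :: L) f = pderiv' i (dList L f) := rfl

lemma dList_append (L₁ L₂ : List (Fin d)) (f) :
    dList (L₁ ++ L₂) f = dList L₁ (dList L₂ f) := by
  simp [dList, List.foldr_append]

lemma iterate_eq_dList (i : Fin d) (k : ℕ) (f) :
    (pderiv' i)^[k] f = dList (List.replicate k i) f := by
  induction k generalizing f with
  | zero => rfl
  | succ n ih =>
    rw [Function.iterate_succ_apply', List.replicate_succ, dList_cons, ih]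

lemma mderiv_eq_dList (α : Fin d → ℕ) (f) :
    mderiv α f = dList ((List.finRange d).flatMap fun i => List.replicate (α i) i) f := by
  rw [mderiv]
  induction (List.finRange d) with
  | nil => rfl
  | cons j js ih =>
    rw [List.foldr_cons, List.flatMap_cons, dList_append, ← ih, iterate_eq_dList]

lemma dList_length_of_mem_antidiagonalTuple {m : ℕ} {α : Fin d → ℕ}
    (hα : α ∈ Finset.Nat.antidiagonalTuple d m) :
    ((List.finRange d).flatMap fun i => List.replicate (α i) i).length = m := by
  rw [List.length_flatMap]
  have := (Finset.Nat.mem_antidiagonalTuple).mp hα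
  rw [← this, Fin.sum_univ_def]
  congr 1
  simp [Function.comp]

section chain
variable (a t : EuclideanSpace ℝ (Fin d)) (h : ℝ)

lemma sigma_hasFDerivAt (x : EuclideanSpace ℝ (Fin d)) :
    HasFDerivAt (fun x => a + h • (x - t))
      (h • ContinuousLinearMap.id ℝ (EuclideanSpace ℝ (Fin d))) x := by
  have h1 : HasFDerivAt (fun x : EuclideanSpace ℝ (Fin d) => x - t)
      (ContinuousLinearMap.id ℝ _) x := (hasFDerivAt_id x).sub_const t
  exact (h1.const_smul h).const_add a

lemma sigma_contDiff : ContDiff ℝ (⊤ : ℕ∞) (fun x : EuclideanSpace ℝ (Fin d) => a + h • (x - t)) :=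
  contDiff_const.add ((contDiff_id.sub contDiff_const).const_smul h)

lemma pderiv'_comp_affine (i : Fin d) (g : EuclideanSpace ℝ (Fin d) → ℝ)
    (hg : Differentiable ℝ g) :
    pderiv' i (fun x => g (a + h • (x - t))) = fun x => h * pderiv' i g (a + h • (x - t)) := by
  funext x
  have hσ := sigma_hasFDerivAt a t h x
  have hcomp := ((hg (a + h • (x - t))).hasFDerivAt).comp x hσ
  simp only [pderiv']
  rw [show (fun x => g (a + h • (x - t))) = g ∘ (fun x => a + h • (x - t)) from rfl,
    hcomp.fderiv]
  simp only [ContinuousLinearMap.coe_comp', Function.comp_apply,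
    ContinuousLinearMap.smul_apply, ContinuousLinearMap.coe_id', id_eq, _root_.map_smul,
    smul_eq_mul]

lemma contDiff_pderiv' {n : ℕ} {g : EuclideanSpace ℝ (Fin d) → ℝ}
    (hg : ContDiff ℝ ((n + 1 : ℕ) : ℕ∞) g) (i : Fin d) :
    ContDiff ℝ (n : ℕ∞) (pderiv' i g) := by
  have := (hg.fderiv_right (m := (n : ℕ∞)) (by exact_mod_cast le_refl (n+1 : ℕ)))
  exact this.clm_apply contDiff_const

lemma dList_comp_affine (L : List (Fin d)) :
    ∀ (n : ℕ) (f : EuclideanSpace ℝ (Fin d) → ℝ), ContDiff ℝ (n : ℕ∞) f → L.length ≤ n →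
      ContDiff ℝ ((n - L.length : ℕ) : ℕ∞) (dList L f) ∧
      dList L (fun x => f (a + h • (x - t)))
        = fun x => h ^ L.length * dList L f (a + h • (x - t)) := by
  induction L with
  | nil =>
    intro n f hf _
    refine ⟨by simpa [dList] using hf, ?_⟩
    funext x; simp [dList]
  | cons i L ih =>
    intro n f hf hlen
    have hlen' : L.length ≤ n := by simp at hlen; omega
    obtain ⟨hsmooth, heq⟩ := ih n f hf hlen'
    have hnl : (n - L.length : ℕ) = (n - (i :: L).length : ℕ) + 1 := by
      simp at hlen ⊢; omega
    have hsmooth' : ContDiff ℝ (((n - (i :: L).length : ℕ) + 1 : ℕ) : ℕ∞) (dList L f) := by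
      rwa [← hnl]
    have hdiff : Differentiable ℝ (dList L f) :=
      hsmooth'.differentiable (by simp)
    constructor
    · rw [dList_cons]
      exact contDiff_pderiv' hsmooth' i
    · rw [dList_cons, heq, dList_cons]
      have step : pderiv' i (fun x => h ^ L.length * dList L f (a + h • (x - t)))
          = fun x => h ^ L.length * pderiv' i (fun x => dList L f (a + h • (x - t))) x := by
        funext x
        simp only [pderiv']
        rw [fderiv_const_mul]
        · simp
        · exact ((hdiff _).hasFDerivAt.comp x (sigma_hasFDerivAt a t h x)).differentiableAt
      rw [step, pderiv'_comp_affine a t h i (dList L f) hdiff]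
      funext x
      simp only [List.length_cons, pow_succ]
      ring
end chain



section meas
variable (a t : EuclideanSpace ℝ (Fin d)) {h : ℝ} (hh : 0 < h)
include hh

omit hh in
lemma sigma_eq_comp :
    (fun x : EuclideanSpace ℝ (Fin d) => a + h • (x - t)) = (fun z : EuclideanSpace ℝ (Fin d) => (a - h • t) + z) ∘ (fun x : EuclideanSpace ℝ (Fin d) => h • x) := by
  funext x
  simp [Function.comp, smul_sub]
  abel

lemma sigma_homeomorph : ∃ e : EuclideanSpace ℝ (Fin d) ≃ₜ EuclideanSpace ℝ (Fin d), ⇑e = fun x : EuclideanSpace ℝ (Fin d) => a + h • (x - t) := by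
  refine ⟨(Homeomorph.smulOfNeZero h hh.ne').trans (Homeomorph.addLeft (a - h • t)), ?_⟩
  rw [sigma_eq_comp a t]
  rfl

lemma sigma_measurableEmbedding : MeasurableEmbedding (fun x : EuclideanSpace ℝ (Fin d) => a + h • (x - t)) := by
  obtain ⟨e, he⟩ := sigma_homeomorph a t hh
  rw [← he]
  exact e.measurableEmbedding

lemma sigma_image_measurable {Ω : Set (EuclideanSpace ℝ (Fin d))} (hΩ : MeasurableSet Ω) :
    MeasurableSet ((fun x : EuclideanSpace ℝ (Fin d) => a + h • (x - t)) '' Ω) :=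
  ((sigma_measurableEmbedding a t hh).measurableSet_image).mpr hΩ

lemma sigma_map_volume :
    Measure.map (fun x : EuclideanSpace ℝ (Fin d) => a + h • (x - t)) volume
      = ENNReal.ofReal ((h ^ d)⁻¹) • volume := by
  rw [sigma_eq_comp a t, ← Measure.map_map (measurable_const_add _) (measurable_const_smul h)]
  have h1 : Measure.map (fun x : EuclideanSpace ℝ (Fin d) => h • x) volume
      = ENNReal.ofReal (|(h ^ d)⁻¹|) • volume := by
    have := Measure.map_addHaar_smul (volume : Measure (EuclideanSpace ℝ (Fin d))) hh.ne'
    rwa [finrank_euclideanSpace_fin] at this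
  rw [h1, Measure.map_smul, (measurePreserving_add_left volume (a - h • t)).map_eq,
    abs_of_nonneg (by positivity)]

lemma sigma_map_restrict {Ω : Set (EuclideanSpace ℝ (Fin d))} (hΩ : MeasurableSet Ω) :
    Measure.map (fun x : EuclideanSpace ℝ (Fin d) => a + h • (x - t)) (volume.restrict Ω)
      = ENNReal.ofReal ((h ^ d)⁻¹) • volume.restrict ((fun x : EuclideanSpace ℝ (Fin d) => a + h • (x - t)) '' Ω) := by
  have hemb := sigma_measurableEmbedding a t hh
  have h1 := Measure.restrict_map hemb.measurable (sigma_image_measurable a t hh hΩ)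
    (μ := (volume : Measure (EuclideanSpace ℝ (Fin d))))
  rw [Set.preimage_image_eq _ hemb.injective, sigma_map_volume a t hh,
    Measure.restrict_smul] at h1
  exact h1.symm

lemma lintegral_comp_sigma {Ω : Set (EuclideanSpace ℝ (Fin d))} (hΩ : MeasurableSet Ω) (g : EuclideanSpace ℝ (Fin d) → ℝ≥0∞) :
    ∫⁻ x in Ω, g (a + h • (x - t)) ∂volume
      = ENNReal.ofReal ((h ^ d)⁻¹) * ∫⁻ z in ((fun x : EuclideanSpace ℝ (Fin d) => a + h • (x - t)) '' Ω), g z ∂volume := by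
  rw [← (sigma_measurableEmbedding a t hh).lintegral_map g, sigma_map_restrict a t hh hΩ,
    lintegral_smul_measure, smul_eq_mul]
end meas

noncomputable def innerL (wh : EuclideanSpace ℝ (Fin d) → ℝ)
    (A : Set (EuclideanSpace ℝ (Fin d))) (φ : EuclideanSpace ℝ (Fin d) → ℝ)
    (x : EuclideanSpace ℝ (Fin d)) : ℝ≥0∞ :=
  ∫⁻ y in A, ENNReal.ofReal (-(wh (x - y) * (φ x - φ y) ^ 2))

noncomputable def outerL (wh : EuclideanSpace ℝ (Fin d) → ℝ)
    (A : Set (EuclideanSpace ℝ (Fin d))) (φ : EuclideanSpace ℝ (Fin d) → ℝ) : ℝ≥0∞ :=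
  ∫⁻ x in A, ENNReal.ofReal ((innerL wh A φ x).toReal)

section repr
variable {wh : EuclideanSpace ℝ (Fin d) → ℝ} (hwhmeas : Measurable wh)
  (hwhneg : ∀ᵐ x : EuclideanSpace ℝ (Fin d), wh x ≤ 0)
  {A : Set (EuclideanSpace ℝ (Fin d))}
  {φ : EuclideanSpace ℝ (Fin d) → ℝ} (hφ : Continuous φ)
include hwhmeas hwhneg hφ
set_option linter.unusedSectionVars false

lemma innerL_measurable : Measurable (innerL wh A φ) := by
  have hF : Measurable (fun p : EuclideanSpace ℝ (Fin d) × EuclideanSpace ℝ (Fin d) =>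
      ENNReal.ofReal (-(wh (p.1 - p.2) * (φ p.1 - φ p.2) ^ 2))) := by
    apply ENNReal.measurable_ofReal.comp
    exact (((hwhmeas.comp (measurable_fst.sub measurable_snd)).mul
      ((((hφ.measurable.comp measurable_fst).sub
        (hφ.measurable.comp measurable_snd))).pow_const 2))).neg
  exact hF.lintegral_prod_right'

lemma inner_repr (x : EuclideanSpace ℝ (Fin d)) :
    (∫ y in A, wh (x - y) * (φ x - φ y) ^ 2) = -((innerL wh A φ x).toReal) := by
  have hmp : MeasurePreserving (fun y : EuclideanSpace ℝ (Fin d) => x - y) volume volume := by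
    have h1 : (fun y : EuclideanSpace ℝ (Fin d) => x - y)
        = (fun y : EuclideanSpace ℝ (Fin d) => x + y) ∘ (fun y : EuclideanSpace ℝ (Fin d) => -y) := by
      funext y; simp [sub_eq_add_neg]
    rw [h1]
    exact (measurePreserving_add_left volume x).comp (Measure.measurePreserving_neg volume)
  have hae0 : ∀ᵐ y : EuclideanSpace ℝ (Fin d), wh (x - y) ≤ 0 := by
    rw [← MeasureTheory.ae_map_iff hmp.measurable.aemeasurable
      (measurableSet_le hwhmeas measurable_const)] at *
    · rwa [hmp.map_eq]
  have hae : ∀ᵐ y ∂(volume.restrict A), 0 ≤ -(wh (x - y) * (φ x - φ y) ^ 2) := by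
    refine ae_restrict_of_ae (hae0.mono fun y hy => ?_)
    have : wh (x - y) * (φ x - φ y) ^ 2 ≤ 0 :=
      mul_nonpos_iff.mpr (Or.inr ⟨hy, sq_nonneg _⟩)
    linarith
  have hmeas : AEStronglyMeasurable
      (fun y => -(wh (x - y) * (φ x - φ y) ^ 2)) (volume.restrict A) := by
    refine Measurable.aestronglyMeasurable ?_
    exact ((hwhmeas.comp (measurable_const.sub measurable_id)).mul
      (((measurable_const.sub hφ.measurable)).pow_const 2)).neg
  have key := integral_eq_lintegral_of_nonneg_ae hae hmeas
  have : (∫ y in A, wh (x - y) * (φ x - φ y) ^ 2)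
      = -(∫ y in A, -(wh (x - y) * (φ x - φ y) ^ 2)) := by
    rw [integral_neg]; ring
  rw [this, key, innerL]

lemma outer_repr (hA : MeasurableSet A) :
    (∫ x in A, ∫ y in A, wh (x - y) * (φ x - φ y) ^ 2) = -((outerL wh A φ).toReal) := by
  have h1 : (∫ x in A, ∫ y in A, wh (x - y) * (φ x - φ y) ^ 2)
      = ∫ x in A, -((innerL wh A φ x).toReal) := by
    refine integral_congr_ae (Filter.Eventually.of_forall fun x => ?_)
    exact inner_repr hwhmeas hwhneg hφ x
  rw [h1]
  have h2 : (∫ x in A, -((innerL wh A φ x).toReal))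
      = -(∫ x in A, ((innerL wh A φ x).toReal)) := by rw [integral_neg]
  rw [h2]
  congr 1
  have hae : ∀ᵐ x ∂(volume.restrict A), 0 ≤ (innerL wh A φ x).toReal :=
    Filter.Eventually.of_forall fun x => ENNReal.toReal_nonneg
  have hm : AEStronglyMeasurable (fun x => (innerL wh A φ x).toReal) (volume.restrict A) :=
    ((innerL_measurable hwhmeas hwhneg hφ).ennreal_toReal).aestronglyMeasurable
  rw [integral_eq_lintegral_of_nonneg_ae hae hm, outerL]
end repr


lemma trunc_sandwich {A B k₁ k₂ : ℝ≥0∞} (hk₁0 : k₁ ≠ 0) (hk₂ : k₂ ≠ ⊤)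
    (h1 : k₁ * A ≤ B) (h2 : B ≤ k₂ * A) :
    k₁ * ENNReal.ofReal A.toReal ≤ ENNReal.ofReal B.toReal ∧
      ENNReal.ofReal B.toReal ≤ k₂ * ENNReal.ofReal A.toReal := by
  by_cases hA : A = ⊤
  · have hB : B = ⊤ := by
      rw [hA, ENNReal.mul_top hk₁0] at h1
      exact top_le_iff.mp h1
    simp [hA, hB]
  · have hB : B ≠ ⊤ := by
      intro hB
      rw [hB, top_le_iff] at h2
      rcases ENNReal.mul_eq_top.mp h2 with ⟨_, h⟩ | ⟨h, _⟩
      · exact hA h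
      · exact hk₂ h

    rw [ENNReal.ofReal_toReal hA, ENNReal.ofReal_toReal hB]
    exact ⟨h1, h2⟩

lemma toReal_sandwich {A B k₁ k₂ : ℝ≥0∞} (hk₁0 : k₁ ≠ 0) (hk₂ : k₂ ≠ ⊤)
    (h1 : k₁ * A ≤ B) (h2 : B ≤ k₂ * A) :
    k₁.toReal * A.toReal ≤ B.toReal ∧ B.toReal ≤ k₂.toReal * A.toReal := by
  by_cases hA : A = ⊤
  · have hB : B = ⊤ := by
      rw [hA, ENNReal.mul_top hk₁0] at h1
      exact top_le_iff.mp h1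
    simp [hA, hB]
  · have hB : B ≠ ⊤ := by
      intro hB
      rw [hB, top_le_iff] at h2
      rcases ENNReal.mul_eq_top.mp h2 with ⟨_, h⟩ | ⟨h, _⟩
      · exact hA h
      · exact hk₂ h

    constructor
    · rw [← ENNReal.toReal_mul]
      exact ENNReal.toReal_mono hB h1
    · rw [← ENNReal.toReal_mul]
      exact ENNReal.toReal_mono (ENNReal.mul_ne_top hk₂ hA) h2

lemma real_pt {h lam C₁ C₂ W W' Δ : ℝ} (hh : 0 < h) (hC₁ : 0 < C₁) (hC₂ : 0 < C₂) (M : ℕ)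
    (h1 : C₁ * h ^ lam * W ≤ W') (h2 : W' ≤ C₂ * h ^ lam * W) :
    C₁⁻¹ * h ^ (2 * (M : ℝ) - lam) * (-(W' * Δ ^ 2)) ≤ -(W * (h ^ M * Δ) ^ 2) ∧
      -(W * (h ^ M * Δ) ^ 2) ≤ C₂⁻¹ * h ^ (2 * (M : ℝ) - lam) * (-(W' * Δ ^ 2)) := by
  set P : ℝ := h ^ (2 * (M : ℝ) - lam) with hP
  have hPpos : 0 < P := Real.rpow_pos_of_pos hh _
  have hlampos : 0 < h ^ lam := Real.rpow_pos_of_pos hh _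
  have E1 : ((h : ℝ) ^ M) ^ 2 = P * h ^ lam := by
    rw [hP, ← Real.rpow_add hh, sub_add_cancel, ← pow_mul,
      ← Real.rpow_natCast h (M * 2)]
    push_cast
    ring_nf
  constructor
  · have key := mul_le_mul_of_nonneg_right h1
      (mul_nonneg (mul_nonneg (inv_pos.mpr hC₁).le hPpos.le) (sq_nonneg Δ))
    calc C₁⁻¹ * P * (-(W' * Δ ^ 2)) = -(W' * (C₁⁻¹ * P * Δ ^ 2)) := by ring
      _ ≤ -((C₁ * h ^ lam * W) * (C₁⁻¹ * P * Δ ^ 2)) := neg_le_neg key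
      _ = -(W * (h ^ M * Δ) ^ 2) := by
          rw [mul_pow, E1]
          field_simp
  · have key := mul_le_mul_of_nonneg_right h2
      (mul_nonneg (mul_nonneg (inv_pos.mpr hC₂).le hPpos.le) (sq_nonneg Δ))
    calc -(W * (h ^ M * Δ) ^ 2) = -((C₂ * h ^ lam * W) * (C₂⁻¹ * P * Δ ^ 2)) := by
          rw [mul_pow, E1]
          field_simp
      _ ≤ -(W' * (C₂⁻¹ * P * Δ ^ 2)) := neg_le_neg key
      _ = C₂⁻¹ * P * (-(W' * Δ ^ 2)) := by ring

section compare
variable {d : ℕ} {wh : EuclideanSpace ℝ (Fin d) → ℝ}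
  {lam C₁ C₂ : ℝ} (hC₁ : 0 < C₁) (hC₂ : 0 < C₂)
  (hhom : ∀ h : ℝ, 0 < h → ∀ x : EuclideanSpace ℝ (Fin d),
    C₁ * h ^ lam * wh x ≤ wh (h • x) ∧ wh (h • x) ≤ C₂ * h ^ lam * wh x)
  (a t : EuclideanSpace ℝ (Fin d)) {h : ℝ} (hh : 0 < h)
  {Ω : Set (EuclideanSpace ℝ (Fin d))} (hΩ : MeasurableSet Ω)
  (φ : EuclideanSpace ℝ (Fin d) → ℝ) (M : ℕ)

set_option linter.unusedSectionVars false

omit hC₁ hC₂ in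
lemma sigma_diff (x y : EuclideanSpace ℝ (Fin d)) :
    (a + h • (x - t)) - (a + h • (y - t)) = h • (x - y) := by
  rw [smul_sub, smul_sub, smul_sub]
  abel

include hC₁ hC₂ hhom hh hΩ in
lemma outerL_sandwich :
    ENNReal.ofReal (C₁⁻¹ * h ^ (2 * (M : ℝ) - lam)) * ENNReal.ofReal ((h ^ d)⁻¹) *
        ENNReal.ofReal ((h ^ d)⁻¹) *
        outerL wh ((fun x => a + h • (x - t)) '' Ω) φ
      ≤ outerL wh Ω (fun z => h ^ M * φ (a + h • (z - t))) ∧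
    outerL wh Ω (fun z => h ^ M * φ (a + h • (z - t)))
      ≤ ENNReal.ofReal (C₂⁻¹ * h ^ (2 * (M : ℝ) - lam)) * ENNReal.ofReal ((h ^ d)⁻¹) *
        ENNReal.ofReal ((h ^ d)⁻¹) *
        outerL wh ((fun x => a + h • (x - t)) '' Ω) φ := by
  have hPpos : (0:ℝ) < h ^ (2 * (M : ℝ) - lam) := Real.rpow_pos_of_pos hh _
  set k₁ : ℝ≥0∞ := ENNReal.ofReal (C₁⁻¹ * h ^ (2 * (M : ℝ) - lam)) with hk₁
  set k₂ : ℝ≥0∞ := ENNReal.ofReal (C₂⁻¹ * h ^ (2 * (M : ℝ) - lam)) with hk₂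
  set c₀ : ℝ≥0∞ := ENNReal.ofReal ((h ^ d)⁻¹) with hc₀
  have hk₁0 : k₁ ≠ 0 := by
    rw [hk₁, Ne, ENNReal.ofReal_eq_zero, not_le]
    positivity
  have hk₁top : k₁ ≠ ⊤ := ENNReal.ofReal_ne_top
  have hk₂top : k₂ ≠ ⊤ := ENNReal.ofReal_ne_top
  have hc₀0 : c₀ ≠ 0 := by
    rw [hc₀, Ne, ENNReal.ofReal_eq_zero, not_le]
    positivity
  have hc₀top : c₀ ≠ ⊤ := ENNReal.ofReal_ne_top
  set σ : EuclideanSpace ℝ (Fin d) → EuclideanSpace ℝ (Fin d) :=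
    fun x => a + h • (x - t) with hσ
  set φ' : EuclideanSpace ℝ (Fin d) → ℝ := fun z => h ^ M * φ (σ z) with hφ'
  -- inner comparison
  have hin : ∀ x, k₁ * (c₀ * innerL wh (σ '' Ω) φ (σ x)) ≤ innerL wh Ω φ' x ∧
      innerL wh Ω φ' x ≤ k₂ * (c₀ * innerL wh (σ '' Ω) φ (σ x)) := by
    intro x
    have hchg : (∫⁻ y in Ω, ENNReal.ofReal (-(wh (σ x - σ y) * (φ (σ x) - φ (σ y)) ^ 2)))
        = c₀ * innerL wh (σ '' Ω) φ (σ x) := by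
      have := lintegral_comp_sigma a t hh hΩ
        (fun z => ENNReal.ofReal (-(wh (σ x - z) * (φ (σ x) - φ z) ^ 2)))
      rw [hσ]
      exact this
    have hpt : ∀ y, k₁ * ENNReal.ofReal (-(wh (σ x - σ y) * (φ (σ x) - φ (σ y)) ^ 2))
          ≤ ENNReal.ofReal (-(wh (x - y) * (φ' x - φ' y) ^ 2)) ∧
        ENNReal.ofReal (-(wh (x - y) * (φ' x - φ' y) ^ 2))
          ≤ k₂ * ENNReal.ofReal (-(wh (σ x - σ y) * (φ (σ x) - φ (σ y)) ^ 2)) := by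
      intro y
      have hd : σ x - σ y = h • (x - y) := sigma_diff a t x y
      have hps := real_pt (Δ := φ (σ x) - φ (σ y)) hh hC₁ hC₂ M
        (hhom h hh (x - y)).1 (hhom h hh (x - y)).2
      rw [mul_sub] at hps
      have hφ'd : φ' x - φ' y = h ^ M * φ (σ x) - h ^ M * φ (σ y) := rfl
      rw [hφ'd, hd]
      constructor
      · rw [hk₁, ← ENNReal.ofReal_mul (by positivity)]
        exact ENNReal.ofReal_le_ofReal hps.1
      · rw [hk₂, ← ENNReal.ofReal_mul (by positivity)]
        exact ENNReal.ofReal_le_ofReal hps.2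
    constructor
    · rw [← hchg, ← lintegral_const_mul' k₁ _ hk₁top]
      exact lintegral_mono fun y => (hpt y).1
    · rw [← hchg, ← lintegral_const_mul' k₂ _ hk₂top]
      exact lintegral_mono fun y => (hpt y).2
  -- truncation
  have htr : ∀ x,
      (k₁ * c₀) * ENNReal.ofReal ((innerL wh (σ '' Ω) φ (σ x)).toReal)
        ≤ ENNReal.ofReal ((innerL wh Ω φ' x).toReal) ∧
      ENNReal.ofReal ((innerL wh Ω φ' x).toReal)
        ≤ (k₂ * c₀) * ENNReal.ofReal ((innerL wh (σ '' Ω) φ (σ x)).toReal) := by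
    intro x
    refine trunc_sandwich (mul_ne_zero hk₁0 hc₀0) (ENNReal.mul_ne_top hk₂top hc₀top) ?_ ?_
    · rw [mul_assoc]
      exact (hin x).1
    · rw [mul_assoc]
      exact (hin x).2
  -- outer change of variable
  have houtchg : (∫⁻ x in Ω, ENNReal.ofReal ((innerL wh (σ '' Ω) φ (σ x)).toReal))
      = c₀ * outerL wh (σ '' Ω) φ := by
    have := lintegral_comp_sigma a t hh hΩ
      (fun z => ENNReal.ofReal ((innerL wh (σ '' Ω) φ z).toReal))
    rw [hσ]
    exact this
  constructor
  · calc k₁ * c₀ * c₀ * outerL wh (σ '' Ω) φ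
        = (k₁ * c₀) * (c₀ * outerL wh (σ '' Ω) φ) := by ring
      _ = (k₁ * c₀) * ∫⁻ x in Ω, ENNReal.ofReal ((innerL wh (σ '' Ω) φ (σ x)).toReal) := by
          rw [houtchg]
      _ = ∫⁻ x in Ω, (k₁ * c₀) * ENNReal.ofReal ((innerL wh (σ '' Ω) φ (σ x)).toReal) := by
          rw [lintegral_const_mul' _ _ (ENNReal.mul_ne_top hk₁top hc₀top)]
      _ ≤ ∫⁻ x in Ω, ENNReal.ofReal ((innerL wh Ω φ' x).toReal) :=
          lintegral_mono fun x => (htr x).1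
      _ = outerL wh Ω φ' := rfl
  · calc outerL wh Ω φ'
        = ∫⁻ x in Ω, ENNReal.ofReal ((innerL wh Ω φ' x).toReal) := rfl
      _ ≤ ∫⁻ x in Ω, (k₂ * c₀) * ENNReal.ofReal ((innerL wh (σ '' Ω) φ (σ x)).toReal) :=
          lintegral_mono fun x => (htr x).2
      _ = (k₂ * c₀) * ∫⁻ x in Ω, ENNReal.ofReal ((innerL wh (σ '' Ω) φ (σ x)).toReal) := by
          rw [lintegral_const_mul' _ _ (ENNReal.mul_ne_top hk₂top hc₀top)]
      _ = (k₂ * c₀) * (c₀ * outerL wh (σ '' Ω) φ) := by rw [houtchg]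
      _ = k₂ * c₀ * c₀ * outerL wh (σ '' Ω) φ := by ring
end compare

/-- scaling of the local Beppo-Levi seminorm under the affine change of
variables `σ(x) = a + h(x − t)`, for a quasi-homogeneous kernel `ŵ` of order `λ`:
`K₁ h^{m−λ/2−d} |f|_{m,σ(Ω)} ≤ |f∘σ|_{m,Ω} ≤ K₂ h^{m−λ/2−d} |f|_{m,σ(Ω)}`,
with `K₁, K₂` independent of `Ω`, `a`, `t`, `h` and `f`. -/
theorem seminorm_scaling_under_affine_change
    (d m : ℕ) (lam : ℝ) (wh : EuclideanSpace ℝ (Fin d) → ℝ)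
    (hwhmeas : Measurable wh) (hwhneg : ∀ᵐ x : EuclideanSpace ℝ (Fin d), wh x ≤ 0)
    (hwheven : ∀ y, wh y = wh (-y))
    (C₁ C₂ : ℝ) (hC₁ : 0 < C₁) (hC₂ : 0 < C₂)
    (hhom : ∀ h : ℝ, 0 < h → ∀ x,
      C₁ * h ^ lam * wh x ≤ wh (h • x) ∧ wh (h • x) ≤ C₂ * h ^ lam * wh x)
    (c : (Fin d → ℕ) → ℝ)
    (hc : ∀ x : Fin d → ℝ,
      ∑ α ∈ Finset.Nat.antidiagonalTuple d m, c α * ∏ i, x i ^ (2 * α i)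
        = (∑ i, x i ^ 2) ^ m) :
    ∃ K₁ K₂ : ℝ, 0 < K₁ ∧ 0 < K₂ ∧
      ∀ (Ω : Set (EuclideanSpace ℝ (Fin d))), MeasurableSet Ω →
      ∀ (a t : EuclideanSpace ℝ (Fin d)) (h : ℝ), 0 < h →
      ∀ f : EuclideanSpace ℝ (Fin d) → ℝ, ContDiff ℝ m f →
        K₁ * h ^ ((m : ℝ) - lam / 2 - d) *
            Real.sqrt (semiSqOn d m wh c ((fun x => a + h • (x - t)) '' Ω) f)
          ≤ Real.sqrt (semiSqOn d m wh c Ω (f ∘ fun x => a + h • (x - t))) ∧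
        Real.sqrt (semiSqOn d m wh c Ω (f ∘ fun x => a + h • (x - t)))
          ≤ K₂ * h ^ ((m : ℝ) - lam / 2 - d) *
            Real.sqrt (semiSqOn d m wh c ((fun x => a + h • (x - t)) '' Ω) f) := by
  refine ⟨Real.sqrt C₁⁻¹, Real.sqrt C₂⁻¹, Real.sqrt_pos.mpr (by positivity),
    Real.sqrt_pos.mpr (by positivity), ?_⟩
  intro Ω hΩ a t h hh f hf
  classical
  set s := Finset.Nat.antidiagonalTuple d m with hs
  have hcnn : ∀ α ∈ s, 0 ≤ c α := c_nonneg d m c hc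
  set σim : Set (EuclideanSpace ℝ (Fin d)) := (fun x => a + h • (x - t)) '' Ω with hσim
  have hσimM : MeasurableSet σim := sigma_image_measurable a t hh hΩ
  have hσcont : Continuous (fun x : EuclideanSpace ℝ (Fin d) => a + h • (x - t)) :=
    continuous_const.add ((continuous_id.sub continuous_const).const_smul h)
  -- per-α facts
  have hφcont : ∀ α ∈ s, Continuous (mderiv α f) := by
    intro α hα
    rw [mderiv_eq_dList]
    have hlen := dList_length_of_mem_antidiagonalTuple (hs ▸ hα)
    have := (dList_comp_affine a t h _ m f hf (le_of_eq hlen)).1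
    rw [hlen, Nat.sub_self] at this
    exact this.continuous
  have hchain : ∀ α ∈ s, mderiv α (f ∘ fun x => a + h • (x - t))
      = fun x => h ^ m * mderiv α f (a + h • (x - t)) := by
    intro α hα
    have hlen := dList_length_of_mem_antidiagonalTuple (hs ▸ hα)
    have hfeq : (f ∘ fun x => a + h • (x - t))
        = fun x => f (a + h • (x - t)) := rfl
    rw [hfeq, mderiv_eq_dList, (dList_comp_affine a t h _ m f hf (le_of_eq hlen)).2, hlen,
      ← mderiv_eq_dList]
  -- outer quantities
  set Aout : (Fin d → ℕ) → ℝ :=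
    fun α => (outerL wh Ω (fun z => h ^ m * mderiv α f (a + h • (z - t)))).toReal with hAout
  set Bout : (Fin d → ℕ) → ℝ := fun α => (outerL wh σim (mderiv α f)).toReal with hBout
  have hBnn : ∀ α, 0 ≤ Bout α := fun α => ENNReal.toReal_nonneg
  -- representation of both seminorms
  have hQ : semiSqOn d m wh c Ω (f ∘ fun x => a + h • (x - t))
      = (1 / 2) * ∑ α ∈ s, c α * Aout α := by
    rw [semiSqOn]
    have hterm : ∀ α ∈ s,
        (∫ x in Ω, ∫ y in Ω, wh (x - y) * (mderiv α (f ∘ fun x => a + h • (x - t)) x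
          - mderiv α (f ∘ fun x => a + h • (x - t)) y) ^ 2) = -(Aout α) := by
      intro α hα
      rw [hchain α hα]
      exact outer_repr hwhmeas hwhneg
        (continuous_const.mul ((hφcont α hα).comp hσcont)) hΩ
    rw [Finset.sum_congr rfl fun α hα => by rw [hterm α hα]]
    rw [show (∑ α ∈ s, c α * -(Aout α)) = -∑ α ∈ s, c α * Aout α by
      rw [← Finset.sum_neg_distrib]; exact Finset.sum_congr rfl fun α _ => by ring]
    ring
  have hS : semiSqOn d m wh c σim f = (1 / 2) * ∑ α ∈ s, c α * Bout α := by
    rw [semiSqOn]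
    have hterm : ∀ α ∈ s,
        (∫ x in σim, ∫ y in σim, wh (x - y) * (mderiv α f x - mderiv α f y) ^ 2)
          = -(Bout α) := by
      intro α hα
      exact outer_repr hwhmeas hwhneg (hφcont α hα) hσimM
    rw [Finset.sum_congr rfl fun α hα => by rw [hterm α hα]]
    rw [show (∑ α ∈ s, c α * -(Bout α)) = -∑ α ∈ s, c α * Bout α by
      rw [← Finset.sum_neg_distrib]; exact Finset.sum_congr rfl fun α _ => by ring]
    ring
  -- scalar constants
  set κ₁ : ℝ := C₁⁻¹ * h ^ (2 * (m : ℝ) - lam) * (h ^ d)⁻¹ * (h ^ d)⁻¹ with hκ₁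
  set κ₂ : ℝ := C₂⁻¹ * h ^ (2 * (m : ℝ) - lam) * (h ^ d)⁻¹ * (h ^ d)⁻¹ with hκ₂
  have hPpos : (0:ℝ) < h ^ (2 * (m : ℝ) - lam) := Real.rpow_pos_of_pos hh _
  -- sandwich per α
  have hsand : ∀ α ∈ s, κ₁ * Bout α ≤ Aout α ∧ Aout α ≤ κ₂ * Bout α := by
    intro α hα
    have hout := outerL_sandwich hC₁ hC₂ hhom a t hh hΩ (mderiv α f) m
    have h10 : ENNReal.ofReal (C₁⁻¹ * h ^ (2 * (m : ℝ) - lam)) * ENNReal.ofReal ((h ^ d)⁻¹)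
        * ENNReal.ofReal ((h ^ d)⁻¹) ≠ 0 := by
      refine mul_ne_zero (mul_ne_zero ?_ ?_) ?_ <;>
        · rw [Ne, ENNReal.ofReal_eq_zero, not_le]; positivity
    have h2top : ENNReal.ofReal (C₂⁻¹ * h ^ (2 * (m : ℝ) - lam)) * ENNReal.ofReal ((h ^ d)⁻¹)
        * ENNReal.ofReal ((h ^ d)⁻¹) ≠ ⊤ :=
      ENNReal.mul_ne_top (ENNReal.mul_ne_top ENNReal.ofReal_ne_top ENNReal.ofReal_ne_top)
        ENNReal.ofReal_ne_top
    have := toReal_sandwich h10 h2top hout.1 hout.2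
    simp only [ENNReal.toReal_mul] at this
    rw [ENNReal.toReal_ofReal (by positivity), ENNReal.toReal_ofReal (by positivity),
      ENNReal.toReal_ofReal (by positivity)] at this
    exact this
  -- sum-level sandwich
  set S : ℝ := semiSqOn d m wh c σim f with hSdef
  set Q : ℝ := semiSqOn d m wh c Ω (f ∘ fun x => a + h • (x - t)) with hQdef
  have hSnn : 0 ≤ S := by
    rw [hS]
    have : ∀ α ∈ s, 0 ≤ c α * Bout α :=
      fun α hα => mul_nonneg (hcnn α hα) (hBnn α)
    have := Finset.sum_nonneg this
    linarith
  have hsum1 : κ₁ * ∑ α ∈ s, c α * Bout α ≤ ∑ α ∈ s, c α * Aout α := by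
    rw [Finset.mul_sum]
    refine Finset.sum_le_sum fun α hα => ?_
    calc κ₁ * (c α * Bout α) = c α * (κ₁ * Bout α) := by ring
      _ ≤ c α * Aout α := mul_le_mul_of_nonneg_left (hsand α hα).1 (hcnn α hα)
  have hsum2 : (∑ α ∈ s, c α * Aout α) ≤ κ₂ * ∑ α ∈ s, c α * Bout α := by
    rw [Finset.mul_sum]
    refine Finset.sum_le_sum fun α hα => ?_
    calc c α * Aout α ≤ c α * (κ₂ * Bout α) :=
          mul_le_mul_of_nonneg_left (hsand α hα).2 (hcnn α hα)
      _ = κ₂ * (c α * Bout α) := by ring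
  have hlow : κ₁ * S ≤ Q := by
    calc κ₁ * S = (1 / 2) * (κ₁ * ∑ α ∈ s, c α * Bout α) := by rw [hS]; ring
      _ ≤ (1 / 2) * ∑ α ∈ s, c α * Aout α := by linarith
      _ = Q := by rw [hQ]
  have hup : Q ≤ κ₂ * S := by
    calc Q = (1 / 2) * ∑ α ∈ s, c α * Aout α := by rw [hQ]
      _ ≤ (1 / 2) * (κ₂ * ∑ α ∈ s, c α * Bout α) := by linarith
      _ = κ₂ * S := by rw [hS]; ring
  -- exponent bookkeeping
  set e : ℝ := (m : ℝ) - lam / 2 - (d : ℝ) with he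
  have hepos : (0:ℝ) < h ^ e := Real.rpow_pos_of_pos hh _
  have hinvd : ((h : ℝ) ^ d)⁻¹ = h ^ (-(d : ℝ)) := by
    rw [Real.rpow_neg hh.le, Real.rpow_natCast]
  have hκ₁e : κ₁ = C₁⁻¹ * (h ^ e) ^ 2 := by
    rw [hκ₁, hinvd, mul_assoc, mul_assoc, ← Real.rpow_add hh, ← Real.rpow_add hh,
      sq, ← Real.rpow_add hh, he]
    congr 1
    ring
  have hκ₂e : κ₂ = C₂⁻¹ * (h ^ e) ^ 2 := by
    rw [hκ₂, hinvd, mul_assoc, mul_assoc, ← Real.rpow_add hh, ← Real.rpow_add hh,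
      sq, ← Real.rpow_add hh, he]
    congr 1
    ring
  have hsq1 : Real.sqrt (κ₁ * S) = Real.sqrt C₁⁻¹ * h ^ e * Real.sqrt S := by
    rw [hκ₁e, Real.sqrt_mul (by positivity), Real.sqrt_mul (by positivity),
      Real.sqrt_sq hepos.le]
  have hsq2 : Real.sqrt (κ₂ * S) = Real.sqrt C₂⁻¹ * h ^ e * Real.sqrt S := by
    rw [hκ₂e, Real.sqrt_mul (by positivity), Real.sqrt_mul (by positivity),
      Real.sqrt_sq hepos.le]
  constructor
  · rw [← hsq1]
    exact Real.sqrt_le_sqrt hlow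
  · rw [← hsq2]
    exact Real.sqrt_le_sqrt hup
end

section
/- Let w : ℝ^d → (0,∞] be measurable with w(x) > 0 for x ≠ 0. For k ≤ m, let φ ∈ C_0^∞(ℝ^d) and set φ_h(x) = h^{-d}φ(x/h) for h > 0. Then there exists C > 0, independent of h, such that for every tempered distribution f with |f|_{k} := (∫ w(x) |x|^{2k} |f̂(x)|² dx)^{1/2} < ∞, one has |φ_h * f|_{m} ≤ C h^{k−m} |f|_{k}, where |g|_{m} := (∫ w(x)|x|^{2m}|ĝ(x)|² dx)^{1/2}. -/
open MeasureTheory FourierTransform Real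

noncomputable def eC {d : ℕ} (x v : EuclideanSpace ℝ (Fin d)) : ℂ :=
  Complex.exp (Complex.ofReal (-2 * π * (inner ℝ v x : ℝ)) * Complex.I)

lemma fourierIntegral_eq_eC {d : ℕ} (f : EuclideanSpace ℝ (Fin d) → ℂ)
    (x : EuclideanSpace ℝ (Fin d)) : 𝓕 f x = ∫ v, eC x v * f v := by
  rw [Real.fourier_eq']
  simp only [smul_eq_mul]
  rfl

lemma eC_add {d : ℕ} (x z y : EuclideanSpace ℝ (Fin d)) :
    eC x (z + y) = eC x z * eC x y := by
  have h : (-2 * π * (inner ℝ (z + y) x : ℝ)) =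
      (-2 * π * (inner ℝ z x : ℝ)) + (-2 * π * (inner ℝ y x : ℝ)) := by
    rw [inner_add_left]; ring
  simp only [eC, h, Complex.ofReal_add, add_mul, Complex.exp_add]

lemma norm_eC {d : ℕ} (x v : EuclideanSpace ℝ (Fin d)) : ‖eC x v‖ = 1 :=
  Complex.norm_exp_ofReal_mul_I _

lemma continuous_eC {d : ℕ} (x : EuclideanSpace ℝ (Fin d)) : Continuous (eC x) := by
  have h1 : Continuous fun v : EuclideanSpace ℝ (Fin d) => (inner ℝ v x : ℝ) :=
    continuous_id.inner continuous_const
  exact Complex.continuous_exp.comp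
    ((Complex.continuous_ofReal.comp (continuous_const.mul h1)).mul continuous_const)

lemma fourier_conv {d : ℕ} (g f : EuclideanSpace ℝ (Fin d) → ℂ)
    (hg : Integrable g) (hf : Integrable f) (x : EuclideanSpace ℝ (Fin d)) :
    𝓕 (fun z => ∫ y, g y * f (z - y)) x = 𝓕 g x * 𝓕 f x := by
  have base : Integrable
      (fun p : EuclideanSpace ℝ (Fin d) × EuclideanSpace ℝ (Fin d) =>
        g p.2 * f (p.1 - p.2)) (volume.prod volume) :=
    hg.convolution_integrand (ContinuousLinearMap.mul ℝ ℂ) hf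
  have hInt : Integrable
      (Function.uncurry fun z y => eC x z * (g y * f (z - y))) (volume.prod volume) := by
    refine base.norm.mono' ?_ (Filter.Eventually.of_forall fun p => ?_)
    · exact ((continuous_eC x).comp continuous_fst).aestronglyMeasurable.mul
        base.aestronglyMeasurable
    · simp only [Function.uncurry, norm_mul, norm_eC, one_mul, le_refl]
  have key : ∀ y, (∫ z, eC x z * (g y * f (z - y))) = (eC x y * g y) * 𝓕 f x := by
    intro y
    calc ∫ z, eC x z * (g y * f (z - y))
        = ∫ z, eC x (z + y) * (g y * f (z + y - y)) :=
          (integral_add_right_eq_self (fun z => eC x z * (g y * f (z - y))) y).symm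
      _ = ∫ z, (eC x y * g y) * (eC x z * f z) := by
          congr 1; funext z; rw [add_sub_cancel_right, eC_add]; ring
      _ = (eC x y * g y) * ∫ z, eC x z * f z := integral_const_mul _ _
      _ = (eC x y * g y) * 𝓕 f x := by rw [← fourierIntegral_eq_eC]
  calc 𝓕 (fun z => ∫ y, g y * f (z - y)) x
      = ∫ z, eC x z * ∫ y, g y * f (z - y) := fourierIntegral_eq_eC _ x
    _ = ∫ z, ∫ y, eC x z * (g y * f (z - y)) := by simp_rw [← integral_const_mul]
    _ = ∫ y, ∫ z, eC x z * (g y * f (z - y)) := integral_integral_swap hInt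
    _ = ∫ y, (eC x y * g y) * 𝓕 f x := by simp_rw [key]
    _ = (∫ y, eC x y * g y) * 𝓕 f x := integral_mul_const _ _
    _ = 𝓕 g x * 𝓕 f x := by rw [← fourierIntegral_eq_eC]

lemma fourier_dilate {d : ℕ} (g : EuclideanSpace ℝ (Fin d) → ℂ) {h : ℝ} (hh : 0 < h)
    (x : EuclideanSpace ℝ (Fin d)) :
    𝓕 (fun y => (((h ^ d)⁻¹ : ℝ) : ℂ) * g (h⁻¹ • y)) x = 𝓕 g (h • x) := by
  rw [fourierIntegral_eq_eC, fourierIntegral_eq_eC]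
  have hd : ∀ v : EuclideanSpace ℝ (Fin d),
      eC x v * ((((h ^ d)⁻¹ : ℝ) : ℂ) * g (h⁻¹ • v)) =
      (fun u => (((h ^ d)⁻¹ : ℝ) : ℂ) * (eC (h • x) u * g u)) (h⁻¹ • v) := by
    intro v
    have hinner : (inner ℝ (h⁻¹ • v) (h • x) : ℝ) = inner ℝ v x := by
      rw [real_inner_smul_left, real_inner_smul_right]
      field_simp
    simp only [eC, hinner]
    ring
  calc ∫ v, eC x v * ((((h ^ d)⁻¹ : ℝ) : ℂ) * g (h⁻¹ • v))
      = ∫ v, (fun u => (((h ^ d)⁻¹ : ℝ) : ℂ) * (eC (h • x) u * g u)) (h⁻¹ • v) := by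
        simp_rw [hd]
    _ = |h ^ Module.finrank ℝ (EuclideanSpace ℝ (Fin d))| •
          ∫ u, (((h ^ d)⁻¹ : ℝ) : ℂ) * (eC (h • x) u * g u) :=
        Measure.integral_comp_inv_smul volume
          (fun u => (((h ^ d)⁻¹ : ℝ) : ℂ) * (eC (h • x) u * g u)) h
    _ = ∫ u, eC (h • x) u * g u := by
        rw [finrank_euclideanSpace_fin, abs_of_pos (pow_pos hh d), integral_const_mul,
          Complex.real_smul]
        rw [← mul_assoc, ← Complex.ofReal_mul, mul_inv_cancel₀ (pow_pos hh d).ne']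
        simp

lemma decay_bound {d : ℕ} (n : ℕ) (φ : EuclideanSpace ℝ (Fin d) → ℂ)
    (hφ : ContDiff ℝ (⊤ : ℕ∞) φ) (hφsupp : HasCompactSupport φ) :
    ∃ C : ℝ, 0 < C ∧ ∀ y, ‖y‖ ^ n * ‖𝓕 φ y‖ ≤ C := by
  have int_all : ∀ (k j : ℕ),
      Integrable (fun v : EuclideanSpace ℝ (Fin d) =>
        ‖v‖ ^ k * ‖iteratedFDeriv ℝ j φ v‖) := by
    intro k j
    have hc : Continuous fun v : EuclideanSpace ℝ (Fin d) =>
        ‖v‖ ^ k * ‖iteratedFDeriv ℝ j φ v‖ :=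
      (continuous_norm.pow k).mul (hφ.continuous_iteratedFDeriv (by exact_mod_cast le_top)).norm
    have hs : HasCompactSupport fun v : EuclideanSpace ℝ (Fin d) =>
        ‖v‖ ^ k * ‖iteratedFDeriv ℝ j φ v‖ :=
      ((hφsupp.iteratedFDeriv j).norm).mul_left
    exact hc.integrable_of_hasCompactSupport hs
  have B : ∀ y : EuclideanSpace ℝ (Fin d), ‖y‖ ^ n * ‖𝓕 φ y‖ ≤
      (2 * π) ^ 0 * (2 * ((0:ℕ):ℝ) + 2) ^ n *
      ∑ p ∈ Finset.range (0 + 1) ×ˢ Finset.range (n + 1),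
        ∫ v : EuclideanSpace ℝ (Fin d), ‖v‖ ^ p.1 * ‖iteratedFDeriv ℝ p.2 φ v‖ := by
    intro y
    have B := Real.pow_mul_norm_iteratedFDeriv_fourier_le (K := (⊤ : ℕ∞)) (N := (⊤ : ℕ∞))
      (hφ.of_le (by simp)) (fun k j _ _ => int_all k j) (k := 0) (n := n) le_top le_top y
    rwa [norm_iteratedFDeriv_zero] at B
  refine ⟨max ((2 * π) ^ 0 * (2 * ((0:ℕ):ℝ) + 2) ^ n *
      ∑ p ∈ Finset.range (0 + 1) ×ˢ Finset.range (n + 1),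
        ∫ v : EuclideanSpace ℝ (Fin d), ‖v‖ ^ p.1 * ‖iteratedFDeriv ℝ p.2 φ v‖) 1,
    lt_of_lt_of_le one_pos (le_max_right _ _), fun y => (B y).trans (le_max_left _ _)⟩

lemma main_aux (d k m : ℕ) (hkm : k ≤ m)
    (w : EuclideanSpace ℝ (Fin d) → ℝ)
    (hw0 : ∀ᵐ x : EuclideanSpace ℝ (Fin d), 0 ≤ w x)
    (φ : EuclideanSpace ℝ (Fin d) → ℝ)
    (hφ : ContDiff ℝ (⊤ : ℕ∞) φ) (hφsupp : HasCompactSupport φ) :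
    ∃ C : ℝ, 0 < C ∧
      ∀ h : ℝ, 0 < h →
      ∀ f : EuclideanSpace ℝ (Fin d) → ℂ, Integrable f →
        Integrable (fun x => w x * ‖x‖ ^ (2 * k) * ‖𝓕 f x‖ ^ 2) →
        Real.sqrt (∫ x, w x * ‖x‖ ^ (2 * m) *
            ‖𝓕 (fun z => ∫ y, ((h ^ d)⁻¹ * φ (h⁻¹ • y) : ℂ) * f (z - y)) x‖ ^ 2)
          ≤ C * h ^ ((k : ℝ) - m) *
            Real.sqrt (∫ x, w x * ‖x‖ ^ (2 * k) * ‖𝓕 f x‖ ^ 2) := by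
  have hφℂ : ContDiff ℝ (⊤ : ℕ∞) (fun v => (φ v : ℂ)) := Complex.ofRealCLM.contDiff.comp hφ
  have hφℂs : HasCompactSupport (fun v => (φ v : ℂ)) := hφsupp.comp_left Complex.ofReal_zero
  obtain ⟨C₀, hC₀pos, hC₀⟩ := decay_bound (m - k) (fun v => (φ v : ℂ)) hφℂ hφℂs
  refine ⟨C₀, hC₀pos, fun h hh f hf hIf => ?_⟩
  have hcpos : 0 < h ^ ((k : ℝ) - m) := Real.rpow_pos_of_pos hh _
  have hcc : h ^ ((k : ℝ) - m) = (h ^ (m - k) : ℝ)⁻¹ := by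
    rw [show ((k : ℝ) - m) = -((m - k : ℕ) : ℝ) by push_cast [Nat.cast_sub hkm]; ring]
    rw [Real.rpow_neg hh.le, Real.rpow_natCast]
  -- integrability of the mollifier
  have hφhc : Continuous fun y : EuclideanSpace ℝ (Fin d) =>
      (((h ^ d)⁻¹ : ℝ) : ℂ) * ((φ (h⁻¹ • y) : ℝ) : ℂ) :=
    continuous_const.mul
      ((Complex.continuous_ofReal.comp hφ.continuous).comp (continuous_const_smul h⁻¹))
  have hφhs : HasCompactSupport fun y : EuclideanSpace ℝ (Fin d) =>
      (((h ^ d)⁻¹ : ℝ) : ℂ) * ((φ (h⁻¹ • y) : ℝ) : ℂ) :=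
    HasCompactSupport.mul_left (hφℂs.comp_smul (inv_ne_zero hh.ne'))
  have hφhI : Integrable fun y : EuclideanSpace ℝ (Fin d) =>
      (((h ^ d)⁻¹ : ℝ) : ℂ) * ((φ (h⁻¹ • y) : ℝ) : ℂ) :=
    hφhc.integrable_of_hasCompactSupport hφhs
  -- Fourier transform of the mollified function
  have hrw : ∀ x : EuclideanSpace ℝ (Fin d),
      𝓕 (fun z => ∫ y, ((h ^ d)⁻¹ * φ (h⁻¹ • y) : ℂ) * f (z - y)) x =
      𝓕 (fun v => (φ v : ℂ)) (h • x) * 𝓕 f x := by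
    intro x
    have e1 : (fun z => ∫ y, ((h ^ d)⁻¹ * φ (h⁻¹ • y) : ℂ) * f (z - y)) =
        (fun z => ∫ y, ((((h ^ d)⁻¹ : ℝ) : ℂ) * ((φ (h⁻¹ • y) : ℝ) : ℂ)) * f (z - y)) := by
      first
      | rfl
      | (funext z; congr 1; funext y; push_cast; ring)
    rw [e1, fourier_conv _ f hφhI hf x, fourier_dilate (fun v => (φ v : ℂ)) hh x]
  -- pointwise bound
  have pt : ∀ x : EuclideanSpace ℝ (Fin d),
      ‖x‖ ^ m * ‖𝓕 (fun v => (φ v : ℂ)) (h • x)‖ ≤ (C₀ * h ^ ((k : ℝ) - m)) * ‖x‖ ^ k := by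
    intro x
    have h1 : ‖x‖ ^ (m - k) * ‖𝓕 (fun v => (φ v : ℂ)) (h • x)‖ ≤ C₀ * h ^ ((k : ℝ) - m) := by
      have hnx : ‖x‖ ^ (m - k) = (h⁻¹) ^ (m - k) * ‖h • x‖ ^ (m - k) := by
        rw [norm_smul, Real.norm_eq_abs, abs_of_pos hh, mul_pow, ← mul_assoc, ← mul_pow,
          inv_mul_cancel₀ hh.ne', one_pow, one_mul]
      rw [hnx, mul_assoc]
      calc (h⁻¹) ^ (m - k) * (‖h • x‖ ^ (m - k) * ‖𝓕 (fun v => (φ v : ℂ)) (h • x)‖)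
          ≤ (h⁻¹) ^ (m - k) * C₀ :=
            mul_le_mul_of_nonneg_left (hC₀ (h • x)) (by positivity)
        _ = C₀ * h ^ ((k : ℝ) - m) := by rw [hcc, inv_pow]; ring
    calc ‖x‖ ^ m * ‖𝓕 (fun v => (φ v : ℂ)) (h • x)‖
        = (‖x‖ ^ (m - k) * ‖𝓕 (fun v => (φ v : ℂ)) (h • x)‖) * ‖x‖ ^ k := by
          rw [mul_right_comm, ← pow_add, Nat.sub_add_cancel hkm]
      _ ≤ (C₀ * h ^ ((k : ℝ) - m)) * ‖x‖ ^ k :=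
          mul_le_mul_of_nonneg_right h1 (by positivity)
  -- squared, weighted pointwise bound
  have ptsq : ∀ x : EuclideanSpace ℝ (Fin d), 0 ≤ w x →
      w x * ‖x‖ ^ (2 * m) * ‖𝓕 (fun v => (φ v : ℂ)) (h • x) * 𝓕 f x‖ ^ 2 ≤
      (C₀ * h ^ ((k : ℝ) - m)) ^ 2 * (w x * ‖x‖ ^ (2 * k) * ‖𝓕 f x‖ ^ 2) := by
    intro x hw
    have e1 : ‖x‖ ^ (2 * m) * ‖𝓕 (fun v => (φ v : ℂ)) (h • x)‖ ^ 2 ≤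
        ((C₀ * h ^ ((k : ℝ) - m)) * ‖x‖ ^ k) ^ 2 := by
      have e0 : ‖x‖ ^ (2 * m) * ‖𝓕 (fun v => (φ v : ℂ)) (h • x)‖ ^ 2 =
          (‖x‖ ^ m * ‖𝓕 (fun v => (φ v : ℂ)) (h • x)‖) ^ 2 := by
        rw [mul_pow, ← pow_mul, mul_comm m 2]
      rw [e0]
      exact pow_le_pow_left₀ (by positivity) (pt x) 2
    have e2 : ‖𝓕 (fun v => (φ v : ℂ)) (h • x) * 𝓕 f x‖ ^ 2 =
        ‖𝓕 (fun v => (φ v : ℂ)) (h • x)‖ ^ 2 * ‖𝓕 f x‖ ^ 2 := by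
      rw [norm_mul, mul_pow]
    calc w x * ‖x‖ ^ (2 * m) * ‖𝓕 (fun v => (φ v : ℂ)) (h • x) * 𝓕 f x‖ ^ 2
        = w x * ((‖x‖ ^ (2 * m) * ‖𝓕 (fun v => (φ v : ℂ)) (h • x)‖ ^ 2) * ‖𝓕 f x‖ ^ 2) := by
          rw [e2]; ring
      _ ≤ w x * ((((C₀ * h ^ ((k : ℝ) - m)) * ‖x‖ ^ k) ^ 2) * ‖𝓕 f x‖ ^ 2) :=
          mul_le_mul_of_nonneg_left
            (mul_le_mul_of_nonneg_right e1 (by positivity)) hw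
      _ = (C₀ * h ^ ((k : ℝ) - m)) ^ 2 * (w x * ‖x‖ ^ (2 * k) * ‖𝓕 f x‖ ^ 2) := by
          rw [mul_pow (C₀ * h ^ ((k : ℝ) - m)) (‖x‖ ^ k), ← pow_mul, mul_comm k 2]; ring
  -- integral bound
  have main : (∫ x, w x * ‖x‖ ^ (2 * m) *
      ‖𝓕 (fun z => ∫ y, ((h ^ d)⁻¹ * φ (h⁻¹ • y) : ℂ) * f (z - y)) x‖ ^ 2) ≤
      (C₀ * h ^ ((k : ℝ) - m)) ^ 2 * ∫ x, w x * ‖x‖ ^ (2 * k) * ‖𝓕 f x‖ ^ 2 := by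
    simp only [hrw]
    rw [← integral_const_mul]
    refine integral_mono_of_nonneg ?_ (hIf.const_mul _) ?_
    · filter_upwards [hw0] with x hx
      positivity
    · filter_upwards [hw0] with x hx
      exact ptsq x hx
  calc Real.sqrt (∫ x, w x * ‖x‖ ^ (2 * m) *
        ‖𝓕 (fun z => ∫ y, ((h ^ d)⁻¹ * φ (h⁻¹ • y) : ℂ) * f (z - y)) x‖ ^ 2)
      ≤ Real.sqrt ((C₀ * h ^ ((k : ℝ) - m)) ^ 2 *
          ∫ x, w x * ‖x‖ ^ (2 * k) * ‖𝓕 f x‖ ^ 2) := Real.sqrt_le_sqrt main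
    _ = (C₀ * h ^ ((k : ℝ) - m)) *
          Real.sqrt (∫ x, w x * ‖x‖ ^ (2 * k) * ‖𝓕 f x‖ ^ 2) := by
        rw [Real.sqrt_mul (sq_nonneg _), Real.sqrt_sq (by positivity)]
    _ = C₀ * h ^ ((k : ℝ) - m) *
          Real.sqrt (∫ x, w x * ‖x‖ ^ (2 * k) * ‖𝓕 f x‖ ^ 2) := by ring


/-- mollification estimate between native-space seminorms of different
orders: `|φ_h * f|_m ≤ C h^{k−m} |f|_k`, where
`|g|_s = (∫ w(x) |x|^{2s} |ĝ(x)|² dx)^{1/2}` and `C` is independent of `h`. -/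
theorem mollified_native_seminorm_bound
    (d k m : ℕ) (hkm : k ≤ m)
    (w : EuclideanSpace ℝ (Fin d) → ℝ) (hwmeas : Measurable w)
    (hwpos : ∀ x, x ≠ 0 → 0 < w x)
    (φ : EuclideanSpace ℝ (Fin d) → ℝ)
    (hφ : ContDiff ℝ (⊤ : ℕ∞) φ) (hφsupp : HasCompactSupport φ) :
    ∃ C : ℝ, 0 < C ∧
      ∀ h : ℝ, 0 < h →
      ∀ f : EuclideanSpace ℝ (Fin d) → ℂ, Integrable f →
        Integrable (fun x => w x * ‖x‖ ^ (2 * k) * ‖𝓕 f x‖ ^ 2) →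
        Real.sqrt (∫ x, w x * ‖x‖ ^ (2 * m) *
            ‖𝓕 (fun z => ∫ y, ((h ^ d)⁻¹ * φ (h⁻¹ • y) : ℂ) * f (z - y)) x‖ ^ 2)
          ≤ C * h ^ ((k : ℝ) - m) *
            Real.sqrt (∫ x, w x * ‖x‖ ^ (2 * k) * ‖𝓕 f x‖ ^ 2) := by
  rcases Nat.eq_zero_or_pos d with hd | hd
  · -- dimension zero: the space is a single point
    subst hd
    haveI : Subsingleton (EuclideanSpace ℝ (Fin 0)) :=
      ⟨fun a b => by ext i; exact absurd i.2 (by simp)⟩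
    rcases Nat.eq_zero_or_pos m with hm | hm
    · -- m = 0, hence k = 0
      have hk : k = 0 := Nat.le_zero.mp (hm ▸ hkm)
      subst hm; subst hk
      rcases le_or_gt 0 (w 0) with hw0 | hw0
      · exact main_aux 0 0 0 le_rfl w
          (Filter.Eventually.of_forall fun x => by rw [Subsingleton.elim x 0]; exact hw0)
          φ hφ hφsupp
      · refine ⟨1, one_pos, fun h hh f hf hIf => ?_⟩
        have hL : (∫ x, w x * ‖x‖ ^ (2 * 0) *
            ‖𝓕 (fun z => ∫ y, ((h ^ 0)⁻¹ * φ (h⁻¹ • y) : ℂ) * f (z - y)) x‖ ^ 2) ≤ 0 := by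
          refine integral_nonpos fun x => ?_
          have hwx : w x ≤ 0 := by rw [Subsingleton.elim x 0]; exact hw0.le
          have : (0:ℝ) ≤ ‖x‖ ^ (2 * 0) *
              ‖𝓕 (fun z => ∫ y, ((h ^ 0)⁻¹ * φ (h⁻¹ • y) : ℂ) * f (z - y)) x‖ ^ 2 := by
            positivity
          rw [mul_assoc]
          exact mul_nonpos_of_nonpos_of_nonneg hwx this
        rw [Real.sqrt_eq_zero_of_nonpos hL]
        have : (0:ℝ) ≤ h ^ ((0 : ℝ) - (0:ℕ)) := Real.rpow_nonneg hh.le _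
        positivity
    · -- m > 0 : the weight ‖x‖^(2m) vanishes identically
      refine ⟨1, one_pos, fun h hh f hf hIf => ?_⟩
      have hzero : ∀ x : EuclideanSpace ℝ (Fin 0), w x * ‖x‖ ^ (2 * m) *
          ‖𝓕 (fun z => ∫ y, ((h ^ 0)⁻¹ * φ (h⁻¹ • y) : ℂ) * f (z - y)) x‖ ^ 2 = 0 := by
        intro x
        rw [Subsingleton.elim x 0, norm_zero, zero_pow (by omega : 2 * m ≠ 0)]
        ring
      rw [show (∫ x, w x * ‖x‖ ^ (2 * m) *
          ‖𝓕 (fun z => ∫ y, ((h ^ 0)⁻¹ * φ (h⁻¹ • y) : ℂ) * f (z - y)) x‖ ^ 2) = 0 by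
        simp only [hzero]; exact integral_zero _ _]
      rw [Real.sqrt_zero]
      have : (0:ℝ) ≤ h ^ ((k : ℝ) - m) := Real.rpow_nonneg hh.le _
      positivity
  · -- positive dimension: the singleton {0} is null
    haveI : Nontrivial (EuclideanSpace ℝ (Fin d)) :=
      ⟨⟨EuclideanSpace.single ⟨0, hd⟩ 1, 0, by
        intro hcon
        have := congrArg (fun v : EuclideanSpace ℝ (Fin d) => v ⟨0, hd⟩) hcon
        simp [EuclideanSpace.single] at this⟩⟩
    have hsing : volume ({(0 : EuclideanSpace ℝ (Fin d))} : Set (EuclideanSpace ℝ (Fin d))) = 0 :=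
      measure_singleton 0
    have hae : ∀ᵐ x : EuclideanSpace ℝ (Fin d), x ≠ 0 := by
      rw [ae_iff]
      convert hsing using 2
      ext x; simp
    exact main_aux d k m hkm w (hae.mono fun x hx => (hwpos x hx).le) φ hφ hφsupp
end
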